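/- Let T be a tree on n vertices with s×s real matrix edge weights W_1,…,W_{n−1} such that each W_i and the sum ∑_{i=1}^{n−1} W_i are invertible, let D be the distance matrix of T, and let L be the Laplacian matrix of T formed from the inverses of the weights. For i = 1,…,n let δ_i = 2 − d_i, where d_i is the degree of vertex i, and let δ = (δ_1,…,δ_n)^T. Then D^{-1} = −(1/2)L + (1/2)(δδ^T) ⊗ (∑_{i=1}^{n−1} W_i)^{-1}. -/

import Mathlib

open Matrix
open scoped Kronecker

/-- Matrix-weighted Laplacian: each edge weight is replaced by its inverse. -/
noncomputable def matLap {n s : ℕ} (G : SimpleGraph (Fin n)) [DecidableRel G.Adj]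
    (w : Sym2 (Fin n) → Matrix (Fin s) (Fin s) ℝ) :
    Matrix (Fin n × Fin s) (Fin n × Fin s) ℝ :=
  Matrix.of fun p q =>
    if p.1 = q.1 then (∑ k ∈ G.neighborFinset p.1, (w s(p.1, k))⁻¹) p.2 q.2
    else if G.Adj p.1 q.1 then (-(w s(p.1, q.1))⁻¹) p.2 q.2
    else 0

/-!
Root the tree at a vertex `j` and write `D_kj` for the weight of the path from `k` to `j`.
If `p` is the parent of `i ≠ j` then `D_ij = W_ip + D_pj`, while every child `k` of `i` has
`D_kj = W_ki + D_ij`; hence the `(i, j)` block of `L D` is `(2[i ≠ j] - d_i) I`.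
Counting every vertex `k ≠ j` together with its parent gives
`∑_k d_k D_kj = 2 ∑_k D_kj - W` with `W = ∑_e W_e`, that is `∑_k δ_k D_kj = W`, so the
`(i, j)` block of `(δ δᵀ ⊗ W⁻¹) D` is `δ_i I`. Adding up, `(-(1/2) L + (1/2) δ δᵀ ⊗ W⁻¹) D = I`.
-/

open Finset

namespace SimpleGraph.IsTree

open Walk

variable {V : Type*} {G : SimpleGraph V} (hT : G.IsTree)

noncomputable def path (u v : V) : G.Walk u v := (hT.existsUnique_path u v).choose

lemma path_isPath (u v : V) : (hT.path u v).IsPath := (hT.existsUnique_path u v).choose_spec.1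

lemma eq_path {u v : V} {p : G.Walk u v} (hp : p.IsPath) : p = hT.path u v :=
  (hT.existsUnique_path u v).choose_spec.2 p hp

lemma path_self (v : V) : hT.path v v = nil := (hT.eq_path IsPath.nil).symm

/-- The parent of `k` in the tree rooted at `j`; junk value `parent j j = j`. -/
noncomputable def parent (j k : V) : V := (hT.path k j).snd

variable {j k : V}

lemma adj_parent (hk : k ≠ j) : G.Adj k (hT.parent j k) :=
  adj_snd (not_nil_of_ne hk)

lemma path_eq_cons_parent (hk : k ≠ j) :
    hT.path k j = cons (hT.adj_parent hk) (hT.path (hT.parent j k) j) := by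
  conv_lhs => rw [← (hT.path k j).cons_tail_eq (not_nil_of_ne hk)]
  rw [hT.eq_path (hT.path_isPath k j).tail]
  rfl

lemma length_path_parent (hk : k ≠ j) :
    (hT.path k j).length = (hT.path (hT.parent j k) j).length + 1 := by
  rw [hT.path_eq_cons_parent hk, length_cons]

lemma parent_ne_of_parent_eq {u v : V} (hu : u ≠ j) (hv : v ≠ j) (huv : hT.parent j u = v) :
    hT.parent j v ≠ u := by
  intro hvu
  have h₁ := hT.length_path_parent hu
  have h₂ := hT.length_path_parent hv
  rw [huv] at h₁
  rw [hvu] at h₂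
  omega

lemma parent_eq_or_parent_eq {u v : V} (h : G.Adj u v) :
    (u ≠ j ∧ hT.parent j u = v) ∨ (v ≠ j ∧ hT.parent j v = u) := by
  by_cases hv : v ∈ (hT.path u j).support
  · have hu : u ≠ j := by
      rintro rfl
      rw [hT.path_self, support_nil, List.mem_singleton] at hv
      exact h.ne hv.symm
    exact .inl ⟨hu, (hT.isAcyclic.eq_snd_of_adj_start (hT.path_isPath u j) h hv).symm⟩
  · have hp : (cons h.symm (hT.path u j)).IsPath := (hT.path_isPath u j).cons hv
    refine .inr ⟨fun hvj => hv (hvj ▸ end_mem_support _), ?_⟩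
    rw [parent, ← hT.eq_path hp, snd_cons]

section Finite

variable [Fintype V] [DecidableEq V] [DecidableRel G.Adj] {M : Type*} [AddCommMonoid M]

lemma sum_neighborFinset_eq_children_add_parent (j i : V) (f : V → M) :
    ∑ k ∈ G.neighborFinset i, f k =
      ∑ k ∈ univ.erase j with hT.parent j k = i, f k + if i = j then 0 else f (hT.parent j i) := by
  rw [← sum_filter_add_sum_filter_not _ (fun k => k ≠ j ∧ hT.parent j k = i)]
  congr 1
  · refine sum_congr (ext fun k => ?_) fun _ _ => rfl
    simp only [mem_filter, mem_neighborFinset, mem_erase, mem_univ, and_true]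
    exact ⟨fun h => h.2, fun h => ⟨h.2 ▸ (hT.adj_parent h.1).symm, h⟩⟩
  · split_ifs with hij
    · refine sum_eq_zero fun k hk => absurd ?_ (mem_filter.1 hk).2
      rcases hT.parent_eq_or_parent_eq (j := j)
        ((G.mem_neighborFinset _ _).1 (mem_filter.1 hk).1) with h | h
      · exact absurd hij h.1
      · exact h
    · convert sum_singleton f (hT.parent j i)
      ext k
      simp only [mem_filter, mem_neighborFinset, mem_singleton, not_and]
      constructor
      · rintro ⟨hik, hk⟩
        rcases hT.parent_eq_or_parent_eq (j := j) hik with h | h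
        · exact h.2.symm
        · exact absurd h.2 (hk h.1)
      · rintro rfl
        exact ⟨hT.adj_parent hij, fun hp => hT.parent_ne_of_parent_eq hij hp rfl⟩

lemma degree_eq_card_children_add (j i : V) :
    G.degree i = #{k ∈ univ.erase j | hT.parent j k = i} + if i = j then 0 else 1 := by
  rw [← card_neighborFinset_eq_degree, card_eq_sum_ones,
    hT.sum_neighborFinset_eq_children_add_parent j, card_eq_sum_ones]

lemma sum_edgeFinset_eq_sum_parent (j : V) (f : Sym2 V → M) :
    ∑ e ∈ G.edgeFinset, f e = ∑ k ∈ univ.erase j, f s(k, hT.parent j k) := by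
  symm
  refine sum_nbij (fun k => s(k, hT.parent j k)) (fun k hk => ?_) (fun a ha b hb hab => ?_)
    (fun e he => ?_) fun _ _ => rfl
  · simpa using hT.adj_parent (mem_erase.1 hk).1
  · rcases Sym2.eq_iff.1 hab with ⟨h, -⟩ | ⟨rfl, hba⟩
    · exact h
    · exact absurd hba (hT.parent_ne_of_parent_eq (mem_erase.1 hb).1 (mem_erase.1 ha).1 rfl)
  · induction e using Sym2.ind with
    | _ u v =>
      rcases hT.parent_eq_or_parent_eq (j := j) (by simpa using he : G.Adj u v) with h | h
      · exact ⟨u, by simpa using h.1, by simp [h.2]⟩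
      · exact ⟨v, by simpa using h.1, by simp [h.2, Sym2.eq_swap]⟩

lemma sum_degree_smul_eq_sum_add_parent (j : V) (f : V → M) :
    ∑ i, G.degree i • f i = ∑ k ∈ univ.erase j, (f k + f (hT.parent j k)) :=
  calc ∑ i, G.degree i • f i
      = ∑ i, ∑ k ∈ G.neighborFinset i, f i := by simp [card_neighborFinset_eq_degree]
    _ = ∑ i, ∑ k ∈ univ.erase j with hT.parent j k = i, f i + ∑ i, if i = j then 0 else f i := by
        simp only [hT.sum_neighborFinset_eq_children_add_parent j, sum_add_distrib]
    _ = ∑ k ∈ univ.erase j, (f k + f (hT.parent j k)) := by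
        rw [sum_fiberwise', sum_ite, sum_const_zero, zero_add, add_comm, sum_add_distrib,
          filter_ne']

end Finite

section PathWeight

variable {M : Type*} [AddCommMonoid M] (w : Sym2 V → M)

noncomputable def pathWeight (u v : V) : M := ((hT.path u v).edges.map w).sum

@[simp]
lemma pathWeight_self (v : V) : hT.pathWeight w v v = 0 := by
  simp [pathWeight, path_self]

lemma pathWeight_eq_add_pathWeight_parent (hk : k ≠ j) :
    hT.pathWeight w k j = w s(k, hT.parent j k) + hT.pathWeight w (hT.parent j k) j := by
  rw [pathWeight, hT.path_eq_cons_parent hk, edges_cons, List.map_cons, List.sum_cons]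
  rfl

end PathWeight

section Handshake

variable [Fintype V] [DecidableEq V] [DecidableRel G.Adj] {M : Type*} [AddCommGroup M]
  (w : Sym2 V → M)

lemma sum_degree_smul_pathWeight (j : V) :
    ∑ i, G.degree i • hT.pathWeight w i j =
      2 • ∑ i, hT.pathWeight w i j - ∑ e ∈ G.edgeFinset, w e := by
  have hparent : ∀ k ∈ univ.erase j, hT.pathWeight w (hT.parent j k) j =
      hT.pathWeight w k j - w s(k, hT.parent j k) := fun k hk => by
    rw [hT.pathWeight_eq_add_pathWeight_parent w (mem_erase.1 hk).1, add_sub_cancel_left]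
  rw [hT.sum_degree_smul_eq_sum_add_parent j, sum_congr rfl fun k hk => by rw [hparent k hk],
    hT.sum_edgeFinset_eq_sum_parent j,
    ← sum_erase univ (f := (hT.pathWeight w · j)) (hT.pathWeight_self w j), two_nsmul,
    sum_add_distrib, sum_sub_distrib, add_sub_assoc]

lemma sum_two_sub_degree_smul_pathWeight {𝕜 : Type*} [Ring 𝕜] [Module 𝕜 M] (j : V) :
    ∑ i, (2 - G.degree i : 𝕜) • hT.pathWeight w i j = ∑ e ∈ G.edgeFinset, w e := by
  simp only [sub_smul, sum_sub_distrib, Nat.cast_smul_eq_nsmul, sum_degree_smul_pathWeight,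
    ← smul_sum, ofNat_smul_eq_nsmul]
  abel

end Handshake

end SimpleGraph.IsTree

namespace SimpleGraph

variable {V m R : Type*} [Fintype V] [DecidableEq V] (G : SimpleGraph V) [DecidableRel G.Adj]
  [Fintype m] [DecidableEq m] [CommRing R]

noncomputable def blockLapMatrix (w : Sym2 V → Matrix m m R) : Matrix V V (Matrix m m R) :=
  of fun i k => if i = k then ∑ l ∈ G.neighborFinset i, (w s(i, l))⁻¹
    else if G.Adj i k then -(w s(i, k))⁻¹ else 0

lemma blockLapMatrix_mul_apply (w : Sym2 V → Matrix m m R) (X : Matrix V V (Matrix m m R))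
    (i j : V) :
    (G.blockLapMatrix w * X) i j = ∑ k ∈ G.neighborFinset i, (w s(i, k))⁻¹ * (X i j - X k j) := by
  have hL : ∀ k, G.blockLapMatrix w i k = (if i = k then ∑ l ∈ G.neighborFinset i, (w s(i, l))⁻¹
      else 0) - if G.Adj i k then (w s(i, k))⁻¹ else 0 := fun k => by
    by_cases hik : i = k
    · subst hik
      simp [blockLapMatrix]
    · by_cases hadj : G.Adj i k <;> simp [blockLapMatrix, hik, hadj]
  simp only [mul_apply, hL, sub_mul, ite_mul, zero_mul, sum_sub_distrib, sum_ite_eq, mem_univ,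
    if_true, ← sum_filter, ← neighborFinset_eq_filter, sum_mul, mul_sub]

variable {G}

lemma IsTree.blockLapMatrix_mul_pathWeight (hT : G.IsTree) {w : Sym2 V → Matrix m m R}
    (hw : ∀ e ∈ G.edgeSet, IsUnit (w e)) (i j : V) :
    (G.blockLapMatrix w * of (hT.pathWeight w)) i j =
      ((if i = j then 0 else 2) - G.degree i : R) • 1 := by
  have inv_mul : ∀ {a b}, G.Adj a b → (w s(a, b))⁻¹ * w s(a, b) = 1 := fun h =>
    nonsing_inv_mul _ ((isUnit_iff_isUnit_det _).1 (hw _ h))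
  have hchild : ∀ k ∈ {k ∈ univ.erase j | hT.parent j k = i},
      (w s(i, k))⁻¹ * (hT.pathWeight w i j - hT.pathWeight w k j) = -1 := fun k hk => by
    obtain ⟨hkj, rfl⟩ := by simpa using hk
    rw [hT.pathWeight_eq_add_pathWeight_parent w hkj, Sym2.eq_swap, sub_add_cancel_right,
      mul_neg, inv_mul (hT.adj_parent hkj)]
  simp only [blockLapMatrix_mul_apply, of_apply, hT.sum_neighborFinset_eq_children_add_parent j i,
    sum_congr rfl hchild, hT.degree_eq_card_children_add j i]
  split_ifs with hij
  · simp only [sum_const, Nat.cast_add]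
    module
  · rw [hT.pathWeight_eq_add_pathWeight_parent w hij, add_sub_cancel_right,
      inv_mul (hT.adj_parent hij)]
    simp only [sum_const, Nat.cast_add, Nat.cast_one]
    module

lemma IsTree.mul_pathWeight_eq_one {K : Type*} [Field K] [CharZero K] (hT : G.IsTree)
    {w : Sym2 V → Matrix m m K} (hw : ∀ e ∈ G.edgeSet, IsUnit (w e))
    (hsum : IsUnit (∑ e ∈ G.edgeFinset, w e)) {δ : V → K} (hδ : ∀ i, δ i = 2 - G.degree i) :
    ((-(1 / 2) : K) • G.blockLapMatrix w +
        (1 / 2 : K) • of fun i k => vecMulVec δ δ i k • (∑ e ∈ G.edgeFinset, w e)⁻¹) *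
      of (hT.pathWeight w) = 1 := by
  set W := ∑ e ∈ G.edgeFinset, w e
  have hW : W⁻¹ * W = 1 := nonsing_inv_mul _ ((isUnit_iff_isUnit_det _).1 hsum)
  ext1 i j
  have hδD : ((of fun i k => vecMulVec δ δ i k • W⁻¹) * of (hT.pathWeight w)) i j = δ i • 1 :=
    calc ∑ k, (vecMulVec δ δ i k • W⁻¹) * hT.pathWeight w k j
        = δ i • (W⁻¹ * ∑ k, δ k • hT.pathWeight w k j) := by
          simp only [vecMulVec_apply, Finset.mul_sum, smul_sum, mul_smul, smul_mul_assoc,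
            mul_smul_comm]
      _ = δ i • 1 := by simp only [hδ, hT.sum_two_sub_degree_smul_pathWeight, W, hW]
  rw [add_mul, smul_mul_assoc, smul_mul_assoc, Matrix.add_apply, Matrix.smul_apply,
    Matrix.smul_apply, hT.blockLapMatrix_mul_pathWeight hw, hδD, one_apply, hδ]
  split_ifs <;> module

end SimpleGraph

lemma matLap_eq_comp {n s : ℕ} (G : SimpleGraph (Fin n)) [DecidableRel G.Adj]
    (w : Sym2 (Fin n) → Matrix (Fin s) (Fin s) ℝ) :
    matLap G w = comp _ _ _ _ _ (G.blockLapMatrix w) := by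
  ext ⟨i, a⟩ ⟨k, c⟩
  by_cases hik : i = k
  · subst hik
    simp [matLap, SimpleGraph.blockLapMatrix]
  · by_cases hadj : G.Adj i k <;> simp [matLap, SimpleGraph.blockLapMatrix, hik, hadj]

lemma Matrix.kronecker_eq_comp {I J K L R : Type*} [Mul R] (A : Matrix I J R)
    (B : Matrix K L R) : A ⊗ₖ B = comp I J K L R (of fun i j => A i j • B) :=
  rfl

/-- Let `T` be a tree on `n` vertices with `s × s` real matrix edge weights such
that each edge weight and the sum of all the edge weights are invertible, let `D` be the
distance matrix of `T`, and let `L` be the Laplacian formed from the inverses of the weights.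
With `δᵢ = 2 - dᵢ` (`dᵢ` the degree of vertex `i`),
`D⁻¹ = -(1/2) L + (1/2) (δ δᵀ) ⊗ (∑ᵢ Wᵢ)⁻¹`. -/
theorem distanceMatrix_inv_tree {n s : ℕ}
    (G : SimpleGraph (Fin n)) [DecidableRel G.Adj] (hT : G.IsTree)
    (w : Sym2 (Fin n) → Matrix (Fin s) (Fin s) ℝ)
    (hw : ∀ e ∈ G.edgeFinset, IsUnit (w e))
    (hsum : IsUnit (∑ e ∈ G.edgeFinset, w e))
    (D : Matrix (Fin n × Fin s) (Fin n × Fin s) ℝ)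
    (hD : ∀ (i j : Fin n) (p : G.Walk i j), p.IsPath →
      ∀ a b, D (i, a) (j, b) = ((p.edges.map w).sum) a b)
    (δ : Fin n → ℝ) (hδ : ∀ i, δ i = 2 - (G.degree i : ℝ)) :
    D⁻¹ = (-(1/2) : ℝ) • matLap G w +
      ((1/2) : ℝ) • (vecMulVec δ δ ⊗ₖ (∑ e ∈ G.edgeFinset, w e)⁻¹) := by
  have hDcomp : D = comp _ _ _ _ _ (of (hT.pathWeight w)) := by
    ext ⟨i, a⟩ ⟨j, b⟩
    exact hD i j _ (hT.path_isPath i j) a b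
  have hblock := congrArg (compRingEquiv _ _ _)
    (hT.mul_pathWeight_eq_one (fun e he => hw e (G.mem_edgeFinset.2 he)) hsum hδ)
  rw [map_mul, map_one] at hblock
  rw [matLap_eq_comp, kronecker_eq_comp, hDcomp]
  exact inv_eq_left_inv hblock
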